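/- arXiv:1903.06209 — 2 statements merged into one kernel-verified Lean document; each statement's English description precedes it below -/
import Mathlib

section
/- Let n be a natural number, C a one-hole context over n variables, ψ a Boolean formula over n variables (the true subformula at the hole), and let R = {x ∈ {0,1}^n : x is relevant for C}. Let μ be a probability measure on the finite type {0,1}^n with μ(R) > 0. Then for every hypothesis h : {0,1}^n → {0,1}, the root-level error satisfies μ({x : eval(C, h, x) ≠ eval(C[ψ], x)}) ≤ μ({x ∈ R : h(x) ≠ eval(ψ, x)}) / μ(R). In words: the test error at the root under the full distribution is at most the error of h under the conditional distribution obtained by filtering to relevant examples, so training on only relevant data does not degrade test performance (Theorem 1 of the paper). -/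
open MeasureTheory


/-- Boolean formulas over `n` variables. -/
inductive BFormula (n : ℕ) : Type where
  | var : Fin n → BFormula n
  | not : BFormula n → BFormula n
  | and : BFormula n → BFormula n → BFormula n
  | or  : BFormula n → BFormula n → BFormula n

/-- Evaluation of a Boolean formula on an assignment. -/
def BFormula.eval {n : ℕ} : BFormula n → (Fin n → Bool) → Bool
  | .var i, x => x i
  | .not φ, x => !(φ.eval x)
  | .and φ ψ, x => φ.eval x && ψ.eval x
  | .or φ ψ, x => φ.eval x || ψ.eval x

/-- One-hole contexts over `n` variables: a Boolean formula with exactly one hole. -/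
inductive Ctx (n : ℕ) : Type where
  | hole : Ctx n
  | not : Ctx n → Ctx n
  | andL : Ctx n → BFormula n → Ctx n
  | andR : BFormula n → Ctx n → Ctx n
  | orL : Ctx n → BFormula n → Ctx n
  | orR : BFormula n → Ctx n → Ctx n

/-- `C.fill ψ` replaces the hole of `C` by the formula `ψ`. -/
def Ctx.fill {n : ℕ} : Ctx n → BFormula n → BFormula n
  | .hole, ψ => ψ
  | .not C, ψ => .not (C.fill ψ)
  | .andL C φ, ψ => .and (C.fill ψ) φ
  | .andR φ C, ψ => .and φ (C.fill ψ)
  | .orL C φ, ψ => .or (C.fill ψ) φ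
  | .orR φ C, ψ => .or φ (C.fill ψ)

/-- `C.evalWith h x` evaluates `C` at `x`, the hole taking the value `h x`. -/
def Ctx.evalWith {n : ℕ} : Ctx n → ((Fin n → Bool) → Bool) → (Fin n → Bool) → Bool
  | .hole, h, x => h x
  | .not C, h, x => !(C.evalWith h x)
  | .andL C φ, h, x => C.evalWith h x && φ.eval x
  | .andR φ C, h, x => φ.eval x && C.evalWith h x
  | .orL C φ, h, x => C.evalWith h x || φ.eval x
  | .orR φ C, h, x => φ.eval x || C.evalWith h x

/-- An assignment `x` is relevant for `C` if flipping the value at the hole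
flips the value at the root. -/
def Ctx.Relevant {n : ℕ} (C : Ctx n) (x : Fin n → Bool) : Prop :=
  C.evalWith (fun _ => false) x ≠ C.evalWith (fun _ => true) x

/-! A wrong root value forces the hole value to be wrong at an assignment where the hole
matters: contexts evaluate pointwise, and at an irrelevant assignment both constant hole
values, hence all hole values, give the same root. So the root error is at most the
relevant hole error, and dividing by `μ R ≤ 1` can only enlarge it. -/

namespace Ctx

variable {n : ℕ}

theorem evalWith_congr (C : Ctx n) {h g : (Fin n → Bool) → Bool} {x : Fin n → Bool}
    (hx : h x = g x) : C.evalWith h x = C.evalWith g x := by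
  induction C <;> simp only [evalWith, *]

theorem eval_fill (C : Ctx n) (ψ : BFormula n) (x : Fin n → Bool) :
    (C.fill ψ).eval x = C.evalWith ψ.eval x := by
  induction C <;> simp only [fill, evalWith, BFormula.eval, *]

theorem evalWith_eq_of_not_relevant (C : Ctx n) {x : Fin n → Bool} (hx : ¬C.Relevant x)
    (h g : (Fin n → Bool) → Bool) : C.evalWith h x = C.evalWith g x := by
  have hconst : C.evalWith (fun _ => false) x = C.evalWith (fun _ => true) x := not_not.1 hx
  have eq_evalWith_false : ∀ f : (Fin n → Bool) → Bool,
      C.evalWith f x = C.evalWith (fun _ => false) x := by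
    intro f
    cases hf : f x
    · exact C.evalWith_congr hf
    · exact (C.evalWith_congr (g := fun _ => true) hf).trans hconst.symm
  rw [eq_evalWith_false h, eq_evalWith_false g]

theorem relevant_and_ne_of_evalWith_ne {C : Ctx n} {h g : (Fin n → Bool) → Bool}
    {x : Fin n → Bool} (hne : C.evalWith h x ≠ C.evalWith g x) : C.Relevant x ∧ h x ≠ g x :=
  ⟨by_contra fun hx => hne (C.evalWith_eq_of_not_relevant hx h g),
    fun hx => hne (C.evalWith_congr hx)⟩

end Ctx

/-- In `ℝ≥0∞`, `a / 0 = ∞` for `a ≠ 0`, so `μ t = 0` needs no separate treatment. -/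
theorem MeasureTheory.measure_le_measure_div_measure {α : Type*} [MeasurableSpace α]
    (μ : Measure α) [IsZeroOrProbabilityMeasure μ] (s t : Set α) : μ s ≤ μ s / μ t :=
  le_mul_of_one_le_right' (ENNReal.one_le_inv.2 prob_le_one)

theorem impact_relevant_filtering_preserves_performance_general
    (n : ℕ) (C : Ctx n) (ψ : BFormula n)
    (μ : Measure (Fin n → Bool)) [IsProbabilityMeasure μ]
    (h : (Fin n → Bool) → Bool) :
    μ {x | C.evalWith h x ≠ (C.fill ψ).eval x} ≤
      μ {x | C.Relevant x ∧ h x ≠ ψ.eval x} / μ {x | C.Relevant x} :=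
  calc μ {x | C.evalWith h x ≠ (C.fill ψ).eval x}
      ≤ μ {x | C.Relevant x ∧ h x ≠ ψ.eval x} := measure_mono fun x hx =>
        Ctx.relevant_and_ne_of_evalWith_ne (by rwa [Set.mem_ofPred_eq, Ctx.eval_fill] at hx)
    _ ≤ _ := measure_le_measure_div_measure μ _ _

/-- **Theorem 1 (Training on only relevant data does not degrade test performance).**
For any one-hole context `C`, true subformula `ψ`, probability measure `μ` on assignments
giving positive weight to the relevant set `R`, and any hypothesis `h`, the root-level
error under `μ` is at most the error of `h` under the conditional distribution on `R`. -/
theorem impact_relevant_filtering_preserves_performance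
    (n : ℕ) (C : Ctx n) (ψ : BFormula n)
    (μ : Measure (Fin n → Bool)) [IsProbabilityMeasure μ]
    (hR : 0 < μ {x | C.Relevant x})
    (h : (Fin n → Bool) → Bool) :
    μ {x | C.evalWith h x ≠ (C.fill ψ).eval x} ≤
      μ {x | C.Relevant x ∧ h x ≠ ψ.eval x} / μ {x | C.Relevant x} :=
  impact_relevant_filtering_preserves_performance_general n C ψ μ h
end

section
/- Error accumulation over a gate tree: let a gate tree over n variables be defined inductively as either a leaf carrying a variable index i < n, or an internal node carrying two functions g_v, h_v : {0,1} × {0,1} → {0,1} (the true gate and the hypothesis gate) together with left and right gate subtrees. For an assignment x ∈ {0,1}^n, define the true evaluation val(T, x) by applying the true gates g_v recursively, and the learned evaluation lval(T, x) by applying the hypothesis gates h_v recursively to the learned values of the children. Then for every probability measure μ on {0,1}^n and every gate tree T: μ({x : lval(T, x) ≠ val(T, x)}) ≤ Σ over internal nodes v of T of μ({x : h_v(val(L_v, x), val(R_v, x)) ≠ g_v(val(L_v, x), val(R_v, x))}), where L_v, R_v are the child subtrees of v. That is, the error of the learned formula at the root is at most the sum over all nodes of the per-node error of the hypothesis gate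 on uncorrupted inputs. -/
/-! A learned node value can be wrong only if a child's learned value is already wrong or the
hypothesis gate errs on correct inputs; the union bound and induction on the tree add up the
per-node errors. -/

open MeasureTheory

/-- A gate tree over `n` variables: a leaf reads an input variable; an internal node
carries a true gate `g` and a hypothesis gate `h` together with two child subtrees. -/
inductive GateTree (n : ℕ) : Type where
  | leaf : Fin n → GateTree n
  | node : (Bool → Bool → Bool) → (Bool → Bool → Bool) →
      GateTree n → GateTree n → GateTree n

/-- True evaluation: apply the true gates recursively. -/
def GateTree.val {n : ℕ} : GateTree n → (Fin n → Bool) → Bool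
  | .leaf i, x => x i
  | .node g _ L R, x => g (L.val x) (R.val x)

/-- Learned evaluation: apply the hypothesis gates recursively to the learned
values of the children. -/
def GateTree.lval {n : ℕ} : GateTree n → (Fin n → Bool) → Bool
  | .leaf i, x => x i
  | .node _ h L R, x => h (L.lval x) (R.lval x)

/-- The sum, over the internal nodes `v` of the tree, of the probability that the
hypothesis gate at `v` disagrees with the true gate at `v` on the (uncorrupted)
true values of the children. -/
noncomputable def GateTree.nodeErrSum {n : ℕ} (μ : Measure (Fin n → Bool)) :
    GateTree n → ENNReal
  | .leaf _ => 0
  | .node g h L R =>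
      μ {x | h (L.val x) (R.val x) ≠ g (L.val x) (R.val x)} +
        L.nodeErrSum μ + R.nodeErrSum μ

namespace GateTree

variable {n : ℕ}

theorem setOf_lval_ne_val_node_subset (g h : Bool → Bool → Bool) (L R : GateTree n) :
    {x | (node g h L R).lval x ≠ (node g h L R).val x} ⊆
      {x | h (L.val x) (R.val x) ≠ g (L.val x) (R.val x)} ∪
        ({x | L.lval x ≠ L.val x} ∪ {x | R.lval x ≠ R.val x}) := by
  intro x hx
  by_cases hL : L.lval x = L.val x
  · by_cases hR : R.lval x = R.val x
    · left
      simpa [lval, val, hL, hR] using hx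
    · exact Or.inr (Or.inr hR)
  · exact Or.inr (Or.inl hL)

theorem measure_node_lval_ne_val_le (μ : Measure (Fin n → Bool))
    (g h : Bool → Bool → Bool) (L R : GateTree n) :
    μ {x | (node g h L R).lval x ≠ (node g h L R).val x} ≤
      μ {x | h (L.val x) (R.val x) ≠ g (L.val x) (R.val x)} +
        μ {x | L.lval x ≠ L.val x} + μ {x | R.lval x ≠ R.val x} :=
  calc
    _ ≤ μ {x | h (L.val x) (R.val x) ≠ g (L.val x) (R.val x)} +
          μ ({x | L.lval x ≠ L.val x} ∪ {x | R.lval x ≠ R.val x}) :=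
      (measure_mono (setOf_lval_ne_val_node_subset g h L R)).trans (measure_union_le _ _)
    _ ≤ _ := by rw [add_assoc]; gcongr; exact measure_union_le _ _

end GateTree

theorem impact_gate_tree_error_accumulation_general
    (n : ℕ) (μ : Measure (Fin n → Bool))
    (T : GateTree n) :
    μ {x | T.lval x ≠ T.val x} ≤ T.nodeErrSum μ := by
  induction T with
  | leaf i => simp [GateTree.val, GateTree.lval, GateTree.nodeErrSum]
  | node g h L R ihL ihR =>
    rw [GateTree.nodeErrSum]
    refine (GateTree.measure_node_lval_ne_val_le μ g h L R).trans ?_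
    gcongr

/-- **Error accumulation over a gate tree.** The probability that the learned
evaluation errs at the root is at most the sum over all internal nodes of the
per-node error of the hypothesis gate on uncorrupted inputs. -/
theorem impact_gate_tree_error_accumulation
    (n : ℕ) (μ : Measure (Fin n → Bool)) [IsProbabilityMeasure μ]
    (T : GateTree n) :
    μ {x | T.lval x ≠ T.val x} ≤ T.nodeErrSum μ :=
  impact_gate_tree_error_accumulation_general n μ T
end
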